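/- For every finite tree T of pathwidth k and every vertex u ∈ V(T), there is a path-partition of T of height at most 2k in which u belongs to the root-path. -/

import Mathlib

/-!
Induction on the width `k` of a path decomposition, alternating with a variant for
decompositions whose bags from some index `t` on have at most `k` vertices and where `u` lies in
one of those late bags; the variant gives height `2k - 1`.

Both steps take a path `P` from `u` as the root-path. As `T` is a tree and `P` is connected, each
component `C` of `T - P` has exactly one vertex adjacent to `P`; a partition of `C` with that
vertex in its root-path hangs one level below `P`. For the main statement, `P` ends in the last
nonempty bag and `t` is the first bag meeting `P`: every nonempty bag from `t` on then meets `P`,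
hence loses a vertex in `C`, and the attachment vertex of `C` lies in a bag from `t` on, so the
variant applies to `C`. For the variant, `P` ends in the first nonempty bag, so it meets every
nonempty bag before `t`; in `C` all bags then have at most `k` vertices, and the main statement
applies with width `k - 1`.
-/

/-- `p 0, p 1, …, p m` is a simple path in `G` (injective, consecutive vertices adjacent). -/
def IsPathSeq {V : Type} (G : SimpleGraph V) (p : ℕ → V) (m : ℕ) : Prop :=
  (∀ i j, i ≤ m → j ≤ m → p i = p j → i = j) ∧ ∀ i < m, G.Adj (p i) (p (i + 1))

/-- A vertex coloring `φ` of `G` is nonrepetitive if there is no simple path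
`v₁ v₂ … v₂ᵣ` (`r ≥ 1`) in `G` with `φ(vᵢ) = φ(v_{r+i})` for all `i ∈ {1,…,r}`. -/
def Nonrepetitive {V : Type} (G : SimpleGraph V) (φ : V → ℕ) : Prop :=
  ∀ r : ℕ, 1 ≤ r → ∀ p : ℕ → V, IsPathSeq G p (2 * r - 1) →
    ∃ i < r, φ (p i) ≠ φ (p (i + r))

/-- `G` is nonrepetitively `ℓ`-choosable: every assignment of color lists of size
at least `ℓ` admits a nonrepetitive coloring from the lists. -/
def ThueChoosable {V : Type} (G : SimpleGraph V) (ℓ : ℕ) : Prop :=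
  ∀ L : V → Finset ℕ, (∀ v, ℓ ≤ (L v).card) →
    ∃ φ : V → ℕ, (∀ v, φ v ∈ L v) ∧ Nonrepetitive G φ

/-- `B 0, …, B (m-1)` is a path decomposition of `G`: every vertex appears in some bag,
the bags containing a given vertex form an interval of indices, and each edge lies in a bag. -/
def IsPathDecomp {V : Type} (G : SimpleGraph V) {m : ℕ} (B : Fin m → Finset V) : Prop :=
  (∀ v, ∃ i, v ∈ B i) ∧
  (∀ v, ∀ i j k : Fin m, i ≤ j → j ≤ k → v ∈ B i → v ∈ B k → v ∈ B j) ∧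
  (∀ u v, G.Adj u v → ∃ i, u ∈ B i ∧ v ∈ B i)

/-- `G` has a path decomposition of width at most `k`. -/
def PathwidthLE {V : Type} (G : SimpleGraph V) (k : ℕ) : Prop :=
  ∃ (m : ℕ) (B : Fin m → Finset V), IsPathDecomp G B ∧ ∀ i, (B i).card ≤ k + 1

/-- The pathwidth of `G`: the least width of a path decomposition of `G`. -/
noncomputable def pathwidth {V : Type} (G : SimpleGraph V) : ℕ :=
  sInf {k | PathwidthLE G k}

/-- A path-partition of a tree `T`: a rooted tree `Q` (on index type `ι`) together with
a collection `P x` (`x : ι`) of vertex-disjoint paths of `T` partitioning `V(T)`, such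
that `x y` is an edge of `Q` iff some edge of `T` joins a vertex of `P x` to a vertex
of `P y`. -/
structure PathPartition {V : Type} (T : SimpleGraph V) (ι : Type) where
  Q : SimpleGraph ι
  root : ι
  isTree : Q.IsTree
  P : ι → Set V
  disjoint : ∀ x y, x ≠ y → Disjoint (P x) (P y)
  cover : ∀ v, ∃ x, v ∈ P x
  isPath : ∀ x, ∃ (m : ℕ) (f : ℕ → V), IsPathSeq T f m ∧ P x = {v | ∃ i ≤ m, f i = v}
  adj_iff : ∀ x y, Q.Adj x y ↔ x ≠ y ∧ ∃ u ∈ P x, ∃ w ∈ P y, T.Adj u w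

/-- The level of a vertex `v` of `T`: the height in the rooted tree `Q` (distance from
the root) of the index `x` with `v ∈ P x`. -/
noncomputable def PathPartition.level {V ι : Type} {T : SimpleGraph V}
    (PP : PathPartition T ι) (v : V) : ℕ :=
  PP.Q.dist PP.root (Classical.choose (PP.cover v))

/-- The minimum level of a vertex on the path `f 0, …, f m` of `T`; the base of
the path consists of its vertices of this level. -/
noncomputable def PathPartition.minLevel {V ι : Type} {T : SimpleGraph V}
    (PP : PathPartition T ι) (f : ℕ → V) (m : ℕ) : ℕ :=
  sInf {l | ∃ i ≤ m, PP.level (f i) = l}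

/-- Every ascending path of `T` is `φ`-good: for every simple path `f 0, …, f m`
whose first vertex lies in its base (i.e. an ascending path enumerated from its source)
and every way of reading its color sequence as a near repetition
`x₁…x_r y₁…y_g x₁…x_r` (`r ≥ 1`, `m + 1 = 2r + g`), strictly more than `r` of the `g`
gap vertices `f r, …, f (r+g-1)` lie in the base of the path. -/
def PathPartition.AscGood {V ι : Type} {T : SimpleGraph V}
    (PP : PathPartition T ι) (φ : V → ℕ) : Prop :=
  ∀ (m : ℕ) (f : ℕ → V), IsPathSeq T f m →
    PP.level (f 0) = PP.minLevel f m →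
    ∀ r g : ℕ, 1 ≤ r → m + 1 = 2 * r + g →
      (∀ i < r, φ (f i) = φ (f (r + g + i))) →
      r < {i : ℕ | r ≤ i ∧ i < r + g ∧ PP.level (f i) = PP.minLevel f m}.ncard

open SimpleGraph

section

variable {V : Type}

def HasRootedPathPartition (T : SimpleGraph V) (u : V) (h : ℕ) : Prop :=
  ∃ (ι : Type) (PP : PathPartition T ι), (∀ x, PP.Q.dist PP.root x ≤ h) ∧ u ∈ PP.P PP.root

variable {T : SimpleGraph V}

lemma SimpleGraph.Walk.IsPath.isPathSeq {a b : V} {p : T.Walk a b} (hp : p.IsPath) :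
    IsPathSeq T p.getVert p.length :=
  ⟨fun _ _ hi hj h => hp.getVert_injOn hi hj h, fun _ hi => p.adj_getVert_succ hi⟩

lemma IsPathSeq.map {W : Type} {G : SimpleGraph W} {f : ℕ → W} {m : ℕ} (φ : G →g T)
    (hφ : Function.Injective φ) (hf : IsPathSeq G f m) : IsPathSeq T (φ ∘ f) m :=
  ⟨fun i j hi hj h => hf.1 i j hi hj (hφ h), fun i hi => φ.map_rel (hf.2 i hi)⟩

lemma SimpleGraph.Reachable.exists_isPath_of_induce {S : Set V} {a b : S}
    (h : (T.induce S).Reachable a b) : ∃ p : T.Walk a b, p.IsPath ∧ ∀ z ∈ p.support, z ∈ S := by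
  classical
  obtain ⟨q⟩ := h
  refine ⟨q.toPath.1.map (Embedding.induce (G := T) S).toHom,
    q.toPath.2.map Subtype.val_injective, fun z hz => ?_⟩
  obtain ⟨z', -, rfl⟩ := List.mem_map.mp (Walk.support_map _ _ ▸ hz)
  exact z'.2

section Components

variable {R : Set V}

def compVerts (c : (T.induce Rᶜ).ConnectedComponent) : Set V := Subtype.val '' c.supp

lemma mem_compVerts {c : (T.induce Rᶜ).ConnectedComponent} {v : V} :
    v ∈ compVerts c ↔ ∃ h : v ∉ R, (T.induce Rᶜ).connectedComponentMk ⟨v, h⟩ = c :=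
  ⟨fun ⟨⟨_, hw⟩, hsupp, hv⟩ => hv ▸ ⟨hw, hsupp⟩, fun ⟨h, hc⟩ => ⟨⟨v, h⟩, hc, rfl⟩⟩

lemma compVerts_subset_compl (c : (T.induce Rᶜ).ConnectedComponent) : compVerts c ⊆ Rᶜ :=
  fun _ hv => (mem_compVerts.mp hv).1

lemma disjoint_compVerts {c c' : (T.induce Rᶜ).ConnectedComponent} (h : c ≠ c') :
    Disjoint (compVerts c) (compVerts c') :=
  Set.disjoint_left.mpr fun _ hv hv' =>
    h ((mem_compVerts.mp hv).2.symm.trans (mem_compVerts.mp hv').2)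

lemma eq_of_mem_compVerts_of_adj {c c' : (T.induce Rᶜ).ConnectedComponent} {v w : V}
    (hv : v ∈ compVerts c) (hw : w ∈ compVerts c') (hadj : T.Adj v w) : c = c' := by
  obtain ⟨h, rfl⟩ := mem_compVerts.mp hv
  obtain ⟨h', rfl⟩ := mem_compVerts.mp hw
  exact ConnectedComponent.connectedComponentMk_eq_of_adj (G := T.induce Rᶜ)
    (v := ⟨v, h⟩) (w := ⟨w, h'⟩) hadj

lemma mem_compVerts_of_adj {c : (T.induce Rᶜ).ConnectedComponent} {v w : V}
    (hv : v ∈ compVerts c) (hw : w ∉ R) (hadj : T.Adj v w) : w ∈ compVerts c := by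
  have hw' : w ∈ compVerts ((T.induce Rᶜ).connectedComponentMk ⟨w, hw⟩) := ⟨_, rfl, rfl⟩
  rwa [← eq_of_mem_compVerts_of_adj hv hw' hadj] at hw'

lemma connected_induce_compVerts (c : (T.induce Rᶜ).ConnectedComponent) :
    (T.induce (compVerts c)).Connected :=
  let φ : c.toSimpleGraph →g T.induce (compVerts c) := ⟨fun v => ⟨v.1.1, v.1, v.2, rfl⟩, id⟩
  c.connected_toSimpleGraph.map φ fun ⟨_, v, hv, hvw⟩ => ⟨⟨v, hv⟩, Subtype.ext hvw⟩

lemma isTree_induce_compVerts (hT : T.IsTree) (c : (T.induce Rᶜ).ConnectedComponent) :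
    (T.induce (compVerts c)).IsTree :=
  ⟨connected_induce_compVerts c, hT.isAcyclic.induce _⟩

lemma exists_mem_compVerts_adj (hT : T.Connected) {r₀ : V} (hr₀ : r₀ ∈ R)
    (c : (T.induce Rᶜ).ConnectedComponent) : ∃ v ∈ compVerts c, ∃ r ∈ R, T.Adj v r := by
  obtain ⟨z, rfl⟩ := c.exists_rep
  obtain ⟨d, -, hd, hd'⟩ := (hT.preconnected z r₀).some.exists_boundary_dart
    (compVerts ((T.induce Rᶜ).connectedComponentMk z)) ⟨z, rfl, rfl⟩
    fun h => compVerts_subset_compl _ h hr₀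
  exact ⟨d.fst, hd, d.snd, by_contra fun h => hd' (mem_compVerts_of_adj hd h d.adj), d.adj⟩

/-- If `v ≠ w`, the tree would contain two paths from `v` to `s`: through the component and `w`,
and through `r` and `R`. -/
lemma SimpleGraph.IsAcyclic.eq_of_mem_compVerts_of_adj_mem (hT : T.IsAcyclic)
    (hR : (T.induce R).Preconnected)
    {c : (T.induce Rᶜ).ConnectedComponent} {v w r s : V} (hv : v ∈ compVerts c)
    (hw : w ∈ compVerts c) (hr : r ∈ R) (hs : s ∈ R) (hvr : T.Adj v r) (hws : T.Adj w s) :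
    v = w := by
  by_contra hvw
  obtain ⟨hv', hcv⟩ := mem_compVerts.mp hv
  obtain ⟨hw', hcw⟩ := mem_compVerts.mp hw
  obtain ⟨pC, hpC, hpC_sub⟩ :=
    Reachable.exists_isPath_of_induce (ConnectedComponent.exact (hcv.trans hcw.symm))
  obtain ⟨pR, hpR, hpR_sub⟩ := Reachable.exists_isPath_of_induce (hR ⟨r, hr⟩ ⟨s, hs⟩)
  have hq₁ : (pC.concat hws).IsPath := hpC.concat (fun h => hpC_sub s h hs) hws
  have hq₂ : (Walk.cons hvr pR).IsPath := hpR.cons fun h => hv' (hpR_sub v h)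
  have heq : pC.concat hws = Walk.cons hvr pR :=
    congrArg Subtype.val ((hT.subsingleton_path v s).elim ⟨_, hq₁⟩ ⟨_, hq₂⟩)
  have hw_mem : w ∈ (Walk.cons hvr pR).support := by
    rw [← heq, Walk.support_concat]
    exact List.mem_append_left _ pC.end_mem_support
  rcases List.mem_cons.mp (Walk.support_cons hvr pR ▸ hw_mem) with h | h
  · exact hvw h.symm
  · exact hw' (hpR_sub w h)

end Components

namespace IsPathDecomp

variable {m : ℕ} {B : Fin m → Finset V}

lemma exists_mem_support_mem (hB : IsPathDecomp T B) {a b : V} (p : T.Walk a b)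
    {i₁ j i₂ : Fin m} (h₁ : i₁ ≤ j) (h₂ : j ≤ i₂) (ha : a ∈ B i₁) (hb : b ∈ B i₂) :
    ∃ v ∈ p.support, v ∈ B j := by
  induction p generalizing i₁ with
  | nil => exact ⟨_, List.mem_singleton_self _, hB.2.1 _ i₁ j i₂ h₁ h₂ ha hb⟩
  | @cons a a' b hadj q ih =>
    obtain ⟨i, hai, ha'i⟩ := hB.2.2 a a' hadj
    rcases le_or_gt i j with hij | hji
    · obtain ⟨v, hv, hvj⟩ := ih hij ha'i hb
      exact ⟨v, List.mem_cons_of_mem _ hv, hvj⟩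
    · exact ⟨a, List.mem_cons_self, hB.2.1 a i₁ j i h₁ hji.le ha hai⟩

lemma induce (hB : IsPathDecomp T B) (S : Set V) [DecidablePred (· ∈ S)] :
    IsPathDecomp (T.induce S) fun j => (B j).subtype (· ∈ S) := by
  refine ⟨fun v => ?_, fun v i j k hij hjk hi hk => ?_, fun a b hab => ?_⟩
  · obtain ⟨i, hi⟩ := hB.1 v
    exact ⟨i, Finset.mem_subtype.mpr hi⟩
  · exact Finset.mem_subtype.mpr
      (hB.2.1 v i j k hij hjk (Finset.mem_subtype.mp hi) (Finset.mem_subtype.mp hk))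
  · obtain ⟨i, hai, hbi⟩ := hB.2.2 a b hab
    exact ⟨i, Finset.mem_subtype.mpr hai, Finset.mem_subtype.mpr hbi⟩

end IsPathDecomp

lemma Finset.card_subtype_lt {α : Type*} {s : Finset α} {p : α → Prop} [DecidablePred p] {a : α}
    (ha : a ∈ s) (hpa : ¬p a) : (s.subtype p).card < s.card := by
  rw [Finset.card_subtype]
  exact Finset.card_lt_card (Finset.filter_ssubset.mpr ⟨a, ha, hpa⟩)

lemma Finset.card_subtype_le {α : Type*} (s : Finset α) (p : α → Prop) [DecidablePred p] :
    (s.subtype p).card ≤ s.card :=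
  (Finset.card_subtype p s).trans_le (Finset.card_filter_le s p)

section Glue

variable {R : Set V} {κ : (T.induce Rᶜ).ConnectedComponent → Type}
  (PP : ∀ c, PathPartition (T.induce (compVerts c)) (κ c))

def glueP : Option (Σ c, κ c) → Set V
  | none => R
  | some ⟨c, x⟩ => Subtype.val '' (PP c).P x

def glueQ : SimpleGraph (Option (Σ c, κ c)) where
  Adj x y := x ≠ y ∧ ∃ a ∈ glueP PP x, ∃ b ∈ glueP PP y, T.Adj a b
  symm := ⟨fun _ _ ⟨hne, a, ha, b, hb, hab⟩ => ⟨hne.symm, b, hb, a, ha, hab.symm⟩⟩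
  loopless := ⟨fun _ h => h.1 rfl⟩

variable {PP}

lemma glueP_some_subset {c : (T.induce Rᶜ).ConnectedComponent} {x : κ c} :
    glueP PP (some ⟨c, x⟩) ⊆ compVerts c := by
  rintro _ ⟨v, -, rfl⟩
  exact v.2

lemma fst_eq_of_glueQ_adj {p q : Σ c, κ c} (h : (glueQ PP).Adj (some p) (some q)) :
    p.1 = q.1 := by
  obtain ⟨-, a, ha, b, hb, hab⟩ := h
  exact eq_of_mem_compVerts_of_adj (glueP_some_subset ha) (glueP_some_subset hb) hab

lemma glueQ_adj_some_some {c : (T.induce Rᶜ).ConnectedComponent} {x y : κ c} :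
    (glueQ PP).Adj (some ⟨c, x⟩) (some ⟨c, y⟩) ↔ (PP c).Q.Adj x y := by
  rw [(PP c).adj_iff]
  constructor
  · rintro ⟨hne, _, ⟨a, ha, rfl⟩, _, ⟨b, hb, rfl⟩, hab⟩
    exact ⟨fun h => hne (h ▸ rfl), a, ha, b, hb, hab⟩
  · rintro ⟨hne, a, ha, b, hb, hab⟩
    exact ⟨fun h => hne (eq_of_heq (Sigma.mk.inj (Option.some.inj h)).2),
      a, ⟨a, ha, rfl⟩, b, ⟨b, hb, rfl⟩, hab⟩

def glueEmbedding (c : (T.induce Rᶜ).ConnectedComponent) : (PP c).Q ↪g glueQ PP where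
  toFun x := some ⟨c, x⟩
  inj' _ _ h := eq_of_heq (Sigma.mk.inj (Option.some.inj h)).2
  map_rel_iff' := glueQ_adj_some_some

lemma glueQ_walk_map_fst_eq {a b : Option (Σ c, κ c)} (W : (glueQ PP).Walk a b)
    (hW : none ∉ W.support) : a.map Sigma.fst = b.map Sigma.fst := by
  induction W with
  | nil => rfl
  | @cons a a' b hadj W ih =>
    rw [Walk.support_cons, List.mem_cons, not_or] at hW
    obtain ⟨p, rfl⟩ := Option.ne_none_iff_exists'.mp (Ne.symm hW.1)
    obtain ⟨q, rfl⟩ := Option.ne_none_iff_exists'.mp fun h => hW.2 (h ▸ W.start_mem_support)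
    rw [← ih hW.2, Option.map_some, Option.map_some, fst_eq_of_glueQ_adj hadj]

lemma isAcyclic_glueQ_induce_range (c : (T.induce Rᶜ).ConnectedComponent) :
    ((glueQ PP).induce (Set.range (glueEmbedding (PP := PP) c))).IsAcyclic :=
  (glueEmbedding c).isoInduceRange.isAcyclic_iff.mp (PP c).isTree.isAcyclic

lemma glueQ_not_isCycle_of_none_notMem {a : Option (Σ c, κ c)} (W : (glueQ PP).Walk a a)
    (hW : none ∉ W.support) : ¬ W.IsCycle := by
  classical
  obtain ⟨⟨c, x⟩, rfl⟩ := Option.ne_none_iff_exists'.mp fun h => hW (h ▸ W.start_mem_support)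
  have hrange : ∀ z ∈ W.support, z ∈ Set.range (glueEmbedding (PP := PP) c) := by
    intro z hz
    obtain ⟨⟨c', y⟩, rfl⟩ := Option.ne_none_iff_exists'.mp fun h => hW (h ▸ hz)
    have hc : c = c' := Option.some.inj <| glueQ_walk_map_fst_eq (W.takeUntil _ hz)
      fun h => hW (W.support_takeUntil_subset_support hz h)
    subst hc
    exact ⟨y, rfl⟩
  intro hcyc
  rw [← Walk.map_induce W hrange] at hcyc
  exact isAcyclic_glueQ_induce_range c _
    ((Walk.isCycle_map_iff_of_injective (Embedding.induce (G := glueQ PP) _).injective).mp hcyc)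

lemma disjoint_glueP {x y : Option (Σ c, κ c)} (hxy : x ≠ y) :
    Disjoint (glueP PP x) (glueP PP y) := by
  match x, y with
  | none, none => exact absurd rfl hxy
  | none, some ⟨c, _⟩ =>
    exact Set.disjoint_right.mpr fun _ ha => compVerts_subset_compl c (glueP_some_subset ha)
  | some ⟨c, _⟩, none =>
    exact Set.disjoint_left.mpr fun _ ha => compVerts_subset_compl c (glueP_some_subset ha)
  | some ⟨c, x⟩, some ⟨c', y⟩ =>
    by_cases hc : c = c'
    · subst hc
      exact Set.disjoint_image_of_injective Subtype.val_injective
        ((PP c).disjoint x y fun h => hxy (h ▸ rfl))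
    · exact (disjoint_compVerts hc).mono glueP_some_subset glueP_some_subset

lemma exists_mem_glueP (v : V) : ∃ x, v ∈ glueP PP x := by
  by_cases hv : v ∈ R
  · exact ⟨none, hv⟩
  · let c := (T.induce Rᶜ).connectedComponentMk ⟨v, hv⟩
    obtain ⟨x, hx⟩ := (PP c).cover ⟨v, ⟨v, hv⟩, rfl, rfl⟩
    exact ⟨some ⟨c, x⟩, _, hx, rfl⟩

lemma exists_isPathSeq_glueP_some (p : Σ c, κ c) :
    ∃ (m : ℕ) (f : ℕ → V), IsPathSeq T f m ∧ glueP PP (some p) = {v | ∃ i ≤ m, f i = v} := by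
  obtain ⟨c, x⟩ := p
  obtain ⟨m, f, hf, hPx⟩ := (PP c).isPath x
  refine ⟨m, Subtype.val ∘ f, hf.map (Embedding.induce _).toHom Subtype.val_injective, ?_⟩
  ext v
  simp only [glueP, hPx, Set.mem_image, Set.mem_ofPred_eq, Function.comp_apply]
  constructor
  · rintro ⟨_, ⟨i, hi, rfl⟩, rfl⟩
    exact ⟨i, hi, rfl⟩
  · rintro ⟨i, hi, rfl⟩
    exact ⟨f i, ⟨i, hi, rfl⟩, rfl⟩

variable (hatt : ∀ c : (T.induce Rᶜ).ConnectedComponent, ∃ v ∈ compVerts c, ∃ r ∈ R, T.Adj v r)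
  (hroot : ∀ c (v : compVerts c), (∃ r ∈ R, T.Adj v r) → v ∈ (PP c).P (PP c).root)
include hatt hroot

lemma glueQ_adj_none_iff {p : Σ c, κ c} :
    (glueQ PP).Adj none (some p) ↔ p = ⟨p.1, (PP p.1).root⟩ := by
  obtain ⟨c, x⟩ := p
  constructor
  · rintro ⟨-, a, ha, _, ⟨b, hb, rfl⟩, hab⟩
    by_contra hx
    refine Set.disjoint_left.mp ((PP c).disjoint x _ fun h => hx (h ▸ rfl)) hb
      (hroot c b ⟨a, ha, hab.symm⟩)
  · intro h
    obtain rfl : x = (PP c).root := eq_of_heq (Sigma.mk.inj h).2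
    obtain ⟨v, hv, r, hr, hvr⟩ := hatt c
    exact ⟨nofun, r, hr, v, ⟨⟨v, hv⟩, hroot c _ ⟨r, hr, hvr⟩, rfl⟩, hvr.symm⟩

lemma glueQ_not_isCycle_none (W : (glueQ PP).Walk none none) : ¬ W.IsCycle := by
  intro hW
  cases W with
  | nil => exact hW.not_nil Walk.Nil.nil
  | @cons _ a₁ _ h₁ W₁ =>
    obtain ⟨hW₁, hedge⟩ := (Walk.cons_isCycle_iff _ _).mp hW
    obtain ⟨p₁, rfl⟩ := Option.ne_none_iff_exists'.mp h₁.ne'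
    obtain ⟨b, h₂, W₂, hrev⟩ := Walk.exists_eq_cons_of_ne (Option.some_ne_none p₁).symm W₁.reverse
    have hW₂ := hW₁.reverse
    rw [hrev, Walk.cons_isPath_iff] at hW₂
    obtain ⟨p₂, rfl⟩ := Option.ne_none_iff_exists'.mp h₂.ne'
    have hfst : p₂.1 = p₁.1 := Option.some.inj (glueQ_walk_map_fst_eq W₂ hW₂.2)
    have hp : p₂ = p₁ := by
      rw [(glueQ_adj_none_iff hatt hroot).mp h₁, (glueQ_adj_none_iff hatt hroot).mp h₂, hfst]
    apply hedge
    rw [← List.mem_reverse, ← Walk.edges_reverse, hrev]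
    subst hp
    exact List.mem_cons_self

lemma glueQ_exists_walk_none_length {c : (T.induce Rᶜ).ConnectedComponent} (x : κ c) :
    ∃ W : (glueQ PP).Walk none (some ⟨c, x⟩), W.length = (PP c).Q.dist (PP c).root x + 1 := by
  obtain ⟨p, hp⟩ := (PP c).isTree.1.exists_walk_length_eq_dist (PP c).root x
  refine ⟨Walk.cons ((glueQ_adj_none_iff hatt hroot).mpr rfl)
    (p.map (glueEmbedding c).toHom), ?_⟩
  exact congrArg (· + 1) ((Walk.length_map _ _).trans hp)

lemma isTree_glueQ : (glueQ PP).IsTree := by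
  refine ⟨Connected.mk fun x y => ?_, fun a W hW => ?_⟩
  · have key : ∀ z, (glueQ PP).Reachable none z := by
      rintro (_ | ⟨c, x⟩)
      · rfl
      · exact (glueQ_exists_walk_none_length hatt hroot x).elim fun W _ => W.reachable
    exact (key x).symm.trans (key y)
  · classical
    by_cases hnone : none ∈ W.support
    · exact glueQ_not_isCycle_none hatt hroot _ (hW.rotate hnone)
    · exact glueQ_not_isCycle_of_none_notMem W hnone hW

def gluePathPartition
    (hR : ∃ (m : ℕ) (f : ℕ → V), IsPathSeq T f m ∧ R = {v | ∃ i ≤ m, f i = v}) :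
    PathPartition T (Option (Σ c, κ c)) where
  Q := glueQ PP
  root := none
  isTree := isTree_glueQ hatt hroot
  P := glueP PP
  disjoint _ _ := disjoint_glueP
  cover := exists_mem_glueP
  isPath
    | none => hR
    | some p => exists_isPathSeq_glueP_some p
  adj_iff _ _ := Iff.rfl

lemma hasRootedPathPartition_glue
    (hR : ∃ (m : ℕ) (f : ℕ → V), IsPathSeq T f m ∧ R = {v | ∃ i ≤ m, f i = v})
    {h : ℕ} (hheight : ∀ c x, (PP c).Q.dist (PP c).root x ≤ h) {u : V} (hu : u ∈ R) :
    HasRootedPathPartition T u (h + 1) := by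
  refine ⟨_, gluePathPartition hatt hroot hR, ?_, hu⟩
  rintro (_ | ⟨c, x⟩)
  · exact (dist_self).trans_le (Nat.zero_le _)
  · obtain ⟨W, hW⟩ := glueQ_exists_walk_none_length hatt hroot x
    exact (dist_le W).trans (hW.trans_le (Nat.add_le_add_right (hheight c x) 1))

end Glue

lemma hasRootedPathPartition_of_subsingleton [Subsingleton V] (u : V) :
    HasRootedPathPartition T u 0 := by
  refine ⟨Unit, ⟨⊥, (), IsTree.of_subsingleton, fun _ => Set.univ,
    fun x y h => absurd (Subsingleton.elim x y) h, fun _ => ⟨(), trivial⟩, fun _ => ?_,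
    fun x y => ⟨False.elim, fun h => absurd (Subsingleton.elim x y) h.1⟩⟩,
    fun _ => dist_self.le, trivial⟩
  refine ⟨0, fun _ => u, ⟨fun i j hi hj _ => by omega, fun i hi => absurd hi (Nat.not_lt_zero i)⟩,
    Set.ext fun v => ⟨fun _ => ⟨0, le_rfl, Subsingleton.elim _ _⟩, fun _ => trivial⟩⟩

lemma hasRootedPathPartition_of_isPath (hT : T.IsTree) {u b : V} {p : T.Walk u b}
    (hp : p.IsPath) {h : ℕ}
    (H : ∀ (c : (T.induce {v | v ∈ p.support}ᶜ).ConnectedComponent) (v : compVerts c),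
      (∃ r ∈ p.support, T.Adj v r) → HasRootedPathPartition (T.induce (compVerts c)) v h) :
    HasRootedPathPartition T u (h + 1) := by
  have hatt := exists_mem_compVerts_adj (R := {v | v ∈ p.support}) hT.1 p.start_mem_support
  have hcomp : ∀ c : (T.induce {v | v ∈ p.support}ᶜ).ConnectedComponent,
      ∃ (κ : Type) (PP : PathPartition (T.induce (compVerts c)) κ),
      (∀ x, PP.Q.dist PP.root x ≤ h) ∧
      ∀ w : compVerts c, (∃ r ∈ p.support, T.Adj w r) → w ∈ PP.P PP.root := by
    intro c
    obtain ⟨v, hv, r, hr, hvr⟩ := hatt c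
    obtain ⟨κ, PP, hPP, hroot⟩ := H c ⟨v, hv⟩ ⟨r, hr, hvr⟩
    refine ⟨κ, PP, hPP, fun w ⟨s, hs, hws⟩ => ?_⟩
    rwa [show w = ⟨v, hv⟩ from Subtype.ext (hT.isAcyclic.eq_of_mem_compVerts_of_adj_mem
      p.connected_induce_support.preconnected w.2 hv hs hr hws hvr)]
  choose κ PP hPP hroot using hcomp
  refine hasRootedPathPartition_glue hatt hroot ⟨p.length, p.getVert, hp.isPathSeq, ?_⟩ hPP
    p.start_mem_support
  ext v
  simp only [Set.mem_ofPred_eq, Walk.mem_support_iff_exists_getVert]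
  exact ⟨fun ⟨i, hi, hil⟩ => ⟨i, hil, hi⟩, fun ⟨i, hil, hi⟩ => ⟨i, hi, hil⟩⟩

def PartitionHeightBound (k : ℕ) : Prop :=
  ∀ (V : Type) (T : SimpleGraph V), T.IsTree → ∀ (m : ℕ) (B : Fin m → Finset V),
    IsPathDecomp T B → (∀ j, (B j).card ≤ k + 1) → ∀ u, HasRootedPathPartition T u (2 * k)

section Induction

variable {m : ℕ} {B : Fin m → Finset V}

lemma partitionHeightBound_zero : PartitionHeightBound 0 := by
  intro V T hT m B hB hw u
  have hnadj : ∀ a b, ¬ T.Adj a b := fun a b hab => by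
    obtain ⟨j, ha, hb⟩ := hB.2.2 a b hab
    exact absurd (hw j) (not_le.mpr (Finset.one_lt_card.mpr ⟨a, ha, b, hb, hab.ne⟩))
  have : Subsingleton V := ⟨fun a b => by
    obtain ⟨q⟩ := hT.1.preconnected a b
    cases q with
    | nil => rfl
    | cons h _ => exact absurd h (hnadj _ _)⟩
  exact hasRootedPathPartition_of_subsingleton u

lemma hasRootedPathPartition_of_late_bags {k : ℕ} (hk : PartitionHeightBound k) (hT : T.IsTree)
    (hB : IsPathDecomp T B) (hw : ∀ j, (B j).card ≤ k + 2) {t : Fin m}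
    (hlate : ∀ j, t ≤ j → (B j).card ≤ k + 1) {u : V} {j₁ : Fin m} (hj₁ : t ≤ j₁)
    (hu : u ∈ B j₁) : HasRootedPathPartition T u (2 * k + 1) := by
  classical
  obtain ⟨j₀, ⟨c₀, hc₀⟩, hj₀⟩ :=
    Set.exists_min_image {j | (B j).Nonempty} id (Set.toFinite _) ⟨j₁, u, hu⟩
  let p := (hT.1.preconnected u c₀).some.toPath
  refine hasRootedPathPartition_of_isPath hT p.2 fun c v _ =>
    hk _ _ (isTree_induce_compVerts hT c) m _ (hB.induce _) (fun j => ?_) v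
  rcases le_or_gt t j with htj | hjt
  · exact (Finset.card_subtype_le _ _).trans (hlate j htj)
  rcases (B j).eq_empty_or_nonempty with he | hne
  · simp [he]
  -- The path runs from the first nonempty bag to `B j₁`, so it meets `B j`.
  obtain ⟨r, hr, hrj⟩ :=
    hB.exists_mem_support_mem (j := j) p.1.reverse (hj₀ j hne) (hjt.le.trans hj₁) hc₀ hu
  rw [Walk.support_reverse, List.mem_reverse] at hr
  exact Nat.le_of_lt_succ ((Finset.card_subtype_lt hrj
    fun h => compVerts_subset_compl c h hr).trans_le (hw j))

lemma partitionHeightBound_succ {k : ℕ} (hk : PartitionHeightBound k) :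
    PartitionHeightBound (k + 1) := by
  intro V T hT m B hB hw u
  classical
  obtain ⟨j₁, hj₁⟩ := hB.1 u
  obtain ⟨j₂, ⟨b, hb⟩, hj₂⟩ :=
    Set.exists_max_image {j | (B j).Nonempty} id (Set.toFinite _) ⟨j₁, u, hj₁⟩
  let p := (hT.1.preconnected u b).some.toPath
  obtain ⟨t, ⟨r₀, hr₀, hr₀t⟩, ht⟩ := Set.exists_min_image {j | ∃ r ∈ p.1.support, r ∈ B j} id
    (Set.toFinite _) ⟨j₁, u, p.1.start_mem_support, hj₁⟩
  rw [show 2 * (k + 1) = 2 * k + 1 + 1 by ring]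
  refine hasRootedPathPartition_of_isPath hT p.2 fun c v ⟨r, hr, hvr⟩ => ?_
  obtain ⟨j₀, hvj₀, hrj₀⟩ := hB.2.2 v r hvr
  refine hasRootedPathPartition_of_late_bags hk (isTree_induce_compVerts hT c) (hB.induce _)
    (fun j => (Finset.card_subtype_le _ _).trans (hw j)) (t := t) (fun j htj => ?_)
    (ht j₀ ⟨r, hr, hrj₀⟩) (Finset.mem_subtype.mpr hvj₀)
  rcases (B j).eq_empty_or_nonempty with he | hne
  · simp [he]
  -- The path runs from a vertex of `B t` to a vertex of the last nonempty bag, so it meets `B j`.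
  obtain ⟨r', hr', hr'j⟩ :=
    hB.exists_mem_support_mem (j := j) (p.1.dropUntil r₀ hr₀) htj (hj₂ j hne) hr₀t hb
  exact Nat.le_of_lt_succ ((Finset.card_subtype_lt hr'j fun h => compVerts_subset_compl c h
    (p.1.support_dropUntil_subset_support hr₀ hr')).trans_le (hw j))

theorem partitionHeightBound : ∀ k, PartitionHeightBound k
  | 0 => partitionHeightBound_zero
  | k + 1 => partitionHeightBound_succ (partitionHeightBound k)

end Induction

lemma pathwidthLE_card [Fintype V] (G : SimpleGraph V) :
    PathwidthLE G (Fintype.card V) :=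
  ⟨1, fun _ => Finset.univ,
    ⟨fun v => ⟨0, Finset.mem_univ v⟩, fun v _ _ _ _ _ _ _ => Finset.mem_univ v,
      fun a b _ => ⟨0, Finset.mem_univ a, Finset.mem_univ b⟩⟩,
    fun _ => Finset.card_univ.trans_le (Nat.le_succ _)⟩

end

/-- For every finite tree `T` of pathwidth `k` and every vertex `u` of `T`, there is a
path-partition of `T` of height at most `2k` in which `u` belongs to the root-path. -/
theorem stmt6 {V : Type} (hV : Finite V) (T : SimpleGraph V) (hT : T.IsTree)
    (k : ℕ) (hpw : pathwidth T = k) (u : V) :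
    ∃ (ι : Type) (PP : PathPartition T ι),
      (∀ x : ι, PP.Q.dist PP.root x ≤ 2 * k) ∧ u ∈ PP.P PP.root := by
  have : Fintype V := Fintype.ofFinite V
  obtain ⟨m, B, hB, hw⟩ : PathwidthLE T k :=
    hpw ▸ Nat.sInf_mem (s := {k | PathwidthLE T k}) ⟨_, pathwidthLE_card T⟩
  exact partitionHeightBound k V T hT m B hB hw u
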